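/- T_P is not in general monotonic with respect to ⊑_∞: there exists a finite propositional normal program P and interpretations I, J with I ⊑_∞ J but T_P(I) ⋢_∞ T_P(J). (Witness: P = {p ← ∼q; s ← p; t ← ∼s; t ← u; u ← t; q ← false} with I = {p↦T_1, q↦F_0, s↦F_0, t↦T_1, u↦F_0} and J = {p↦T_1, q↦F_0, s↦F_1, t↦F_1, u↦F_1}.) -/

import Mathlib

/-!
Number the atoms `p, q, s, t, u` as `0, …, 4`. Then `I ⊏_0 J`: both have empty `T_0`-level and `J`
removes `s` and `u` from the `F_0`-level of `I`. The images `T_P(I)` and `T_P(J)` agree at order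
`0`, but `t ← ∼s` gives `t` the value `¬F_0 = T_1` under `I` and `¬F_1 = T_2` under `J`. So `t` lies
in the `T_1`-level of `T_P(I)` but not in that of `T_P(J)`, which rules out `T_P(I) ⊑_α T_P(J)` for
every `α`.
-/

open Ordinal Set

noncomputable section
attribute [local instance] Classical.propDecidable

namespace IVS

/-- Countable ordinals: ordinals below `ω₁`. -/
abbrev Ord1 := {o : Ordinal.{0} // o < ω₁}

theorem zero_lt_omega1 : (0 : Ordinal) < ω₁ := omega_pos 1

theorem succ_lt_omega1 {o : Ordinal} (h : o < ω₁) : o + 1 < ω₁ := by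
  rw [← Order.succ_eq_add_one]
  exact (Cardinal.isSuccLimit_omega 1).succ_lt h

/-- zero as a countable ordinal -/
def O0 : Ord1 := ⟨0, zero_lt_omega1⟩

/-- successor on countable ordinals -/
def Ord1.succ (a : Ord1) : Ord1 := ⟨a.1 + 1, succ_lt_omega1 a.2⟩

/-- The truth domain `V`: `F_α < ⋯ < 0 < ⋯ < T_α` realized as a lexicographic sum. -/
abbrev TV := Ord1 ⊕ₗ (Unit ⊕ₗ Ord1ᵒᵈ)

/-- the false value `F_α` -/
def TV.F (a : Ord1) : TV := toLex (Sum.inl a)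
/-- the middle value `0` -/
def TV.Z : TV := toLex (Sum.inr (toLex (Sum.inl ())))
/-- the true value `T_α` -/
def TV.T (a : Ord1) : TV := toLex (Sum.inr (toLex (Sum.inr (OrderDual.toDual a))))

/-- the order of a truth value (`⊤` codes `+∞`, the order of `0`) -/
def ordOf (v : TV) : WithTop Ordinal :=
  match ofLex v with
  | .inl a => (a.1 : Ordinal)
  | .inr b =>
    match ofLex b with
    | .inl _ => ⊤
    | .inr a => ((OrderDual.ofDual a).1 : Ordinal)

/-- negation-as-failure: `¬F_α = T_{α+1}`, `¬T_α = F_{α+1}`, `¬0 = 0`. -/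
def negv (v : TV) : TV :=
  match ofLex v with
  | .inl a => TV.T a.succ
  | .inr b =>
    match ofLex b with
    | .inl _ => TV.Z
    | .inr a => TV.F (OrderDual.ofDual a).succ

/-- Literals of a propositional normal program (atoms are natural numbers). -/
inductive Lit where
  | pos (n : ℕ)
  | neg (n : ℕ)
  | tt
  | ff

/-- A normal program clause: a head atom and a body which is a conjunction of literals. -/
structure Clause where
  head : ℕ
  body : List Lit

/-- A (possibly infinite) propositional normal logic program. -/
abbrev Program := Set Clause

/-- Infinite-valued interpretations. -/
abbrev Interp := ℕ → TV

/-- the interpretation assigning `F₀` to every atom (denoted `∅` in the paper) -/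
def botI : Interp := fun _ => TV.F O0

def evalLit (I : Interp) : Lit → TV
  | .pos n => I n
  | .neg n => negv (I n)
  | .tt => TV.T O0
  | .ff => TV.F O0

/-- value of a body (conjunction evaluated by `min`; empty conjunction is `T₀`) -/
def evalBody (I : Interp) (b : List Lit) : TV :=
  (b.map (evalLit I)).foldr min (TV.T O0)

/-- least upper bound in `V` (well-defined by the lub-existence theorem) -/
def lub (S : Set TV) : TV := if h : ∃ v, IsLUB S v then h.choose else TV.Z

/-- the immediate consequence operator -/
def TP (P : Program) (I : Interp) : Interp :=
  fun p => lub {v | ∃ c ∈ P, c.head = p ∧ evalBody I c.body = v}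

/-- `I` is an (infinite-valued) model of `P` -/
def isModel (P : Program) (I : Interp) : Prop :=
  ∀ c ∈ P, evalBody I c.body ≤ I c.head

/-- the level set `I ∥ v` -/
def level (I : Interp) (v : TV) : Set ℕ := {p | I p = v}

/-- `I =_α J` -/
def eqA (α : Ord1) (I J : Interp) : Prop :=
  ∀ β ≤ α, level I (TV.T β) = level J (TV.T β) ∧ level I (TV.F β) = level J (TV.F β)

/-- `I ⊏_α J` -/
def sqltA (α : Ord1) (I J : Interp) : Prop :=
  (∀ β < α, eqA β I J) ∧
    ((level I (TV.T α) ⊂ level J (TV.T α) ∧ level J (TV.F α) ⊆ level I (TV.F α)) ∨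
     (level I (TV.T α) ⊆ level J (TV.T α) ∧ level J (TV.F α) ⊂ level I (TV.F α)))

/-- `I ⊑_α J` -/
def sqleA (α : Ord1) (I J : Interp) : Prop := eqA α I J ∨ sqltA α I J

/-- `I ⊏_∞ J` -/
def sqltInf (I J : Interp) : Prop := ∃ α : Ord1, sqltA α I J

/-- `I ⊑_∞ J` -/
def sqleInf (I J : Interp) : Prop := I = J ∨ sqltInf I J

/-- the sequence `T_P^n(I)` is an `α`-chain -/
def isChainA (P : Program) (α : Ord1) (I : Interp) : Prop :=
  ∀ n : ℕ, sqleA α ((TP P)^[n] I) ((TP P)^[n + 1] I)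

/-- the interpretation `T_{P,α}^ω(I)` -/
def TPomega (P : Program) (α : Ord1) (I : Interp) : Interp := fun p =>
  if ordOf (I p) < (α.1 : WithTop Ordinal) then I p
  else if ∃ n : ℕ, (TP P)^[n] I p = TV.T α then TV.T α
  else if ∀ n : ℕ, (TP P)^[n] I p = TV.F α then TV.F α
  else TV.F α.succ

/-- `⊔_{β<α} M_β` for a family defined below `α` -/
def sqcupI (α : Ord1) (f : ∀ β : Ordinal, β < α.1 → Interp) : Interp := fun p =>
  if h : ∃ β : Ordinal, ∃ hb : β < α.1, ordOf (f β hb p) = (β : WithTop Ordinal)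
  then f h.choose h.choose_spec.choose p
  else TV.F α

/-- the approximations `M_α` to the minimum model (junk values for `α ≥ ω₁`) -/
def MA (P : Program) (o : Ordinal) : Interp :=
  Ordinal.limitRecOn o
    (TPomega P O0 botI)
    (fun o' ih => if h : o' + 1 < ω₁ then TPomega P ⟨o' + 1, h⟩ ih else ih)
    (fun o' _ ih =>
      if h : o' < ω₁ then TPomega P ⟨o', h⟩ (sqcupI ⟨o', h⟩ ih) else botI)

/-- `M_α` for a countable ordinal `α` -/
def Mα (P : Program) (α : Ord1) : Interp := MA P α.1

/-- the defining property of the depth `δ` of a program -/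
def isDepth (P : Program) (δ : Ord1) : Prop :=
  (level (Mα P δ) (TV.T δ) = ∅ ∧ level (Mα P δ) (TV.F δ) = ∅) ∧
    ∀ β : Ord1, β < δ →
      (level (Mα P β) (TV.T β) ≠ ∅ ∨ level (Mα P β) (TV.F β) ≠ ∅)

/-- the depth of a program -/
def depth (P : Program) : Ord1 :=
  if h : ∃ δ : Ord1, isDepth P δ then h.choose else O0

/-- the minimum model `M_P` -/
def MP (P : Program) : Interp := fun p =>
  if ordOf (Mα P (depth P) p) < ((depth P).1 : WithTop Ordinal)
  then Mα P (depth P) p else TV.Z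

/-- the set of all infinite-valued models of `P` -/
def models (P : Program) : Set Interp := {I | isModel P I}

/-- `M ♯ α`: the part of `M` consisting of values of order `α` -/
def sharp (I : Interp) (α : Ord1) : Set (ℕ × TV) :=
  {pv | I pv.1 = pv.2 ∧ ordOf pv.2 = (α.1 : WithTop Ordinal)}

/-- `⨀^α S = ⋀^α S ∪ ⋁^α S` -/
def odot (α : Ord1) (S : Set Interp) : Set (ℕ × TV) :=
  {pv | (∃ p : ℕ, pv = (p, TV.T α) ∧ ∀ M ∈ S, M p = TV.T α) ∨
        (∃ p : ℕ, pv = (p, TV.F α) ∧ ∃ M ∈ S, M p = TV.F α)}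

/-- the sets `S_α` of the model intersection construction (junk for `α ≥ ω₁`) -/
def SA (P : Program) (o : Ordinal) : Set Interp :=
  Ordinal.limitRecOn o
    {M ∈ models P | sharp M O0 = odot O0 (models P)}
    (fun o' ih =>
      if h : o' + 1 < ω₁ then {M ∈ ih | sharp M ⟨o' + 1, h⟩ = odot ⟨o' + 1, h⟩ ih} else ih)
    (fun o' _ ih =>
      if h : o' < ω₁ then
        {M : Interp | M ∈ (⋂ (b : Ordinal) (hb : b < o'), ih b hb) ∧
          sharp M ⟨o', h⟩ = odot ⟨o', h⟩ (⋂ (b : Ordinal) (hb : b < o'), ih b hb)}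
      else ∅)

lemma O0_le (a : Ord1) : O0 ≤ a := Subtype.coe_le_coe.mp zero_le

lemma Ord1.lt_succ_iff {a b : Ord1} : b < a.succ ↔ b ≤ a :=
  Order.lt_add_one_iff (x := b.1) (y := a.1)

def Ord1.ofNat (n : ℕ) : Ord1 := ⟨n, (natCast_lt_omega0 n).trans omega0_lt_omega_one⟩

@[simp] lemma Ord1.ofNat_inj {m n : ℕ} : Ord1.ofNat m = Ord1.ofNat n ↔ m = n := by
  simp [Ord1.ofNat]

@[simp] lemma O0_eq_ofNat_zero : O0 = Ord1.ofNat 0 := by simp [Ord1.ofNat, O0]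

@[simp] lemma Ord1.succ_ofNat (n : ℕ) : (Ord1.ofNat n).succ = Ord1.ofNat (n + 1) := by
  simp [Ord1.ofNat, Ord1.succ]

@[simp] lemma TV.T_inj {a b : Ord1} : TV.T a = TV.T b ↔ a = b := by simp [TV.T]
@[simp] lemma TV.F_inj {a b : Ord1} : TV.F a = TV.F b ↔ a = b := by simp [TV.F]
@[simp] lemma TV.F_ne_T (a b : Ord1) : TV.F a ≠ TV.T b := by simp [TV.F, TV.T]
@[simp] lemma TV.T_ne_F (a b : Ord1) : TV.T a ≠ TV.F b := (TV.F_ne_T b a).symm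

lemma TV.F_le_T (a b : Ord1) : TV.F a ≤ TV.T b := by simp [TV.F, TV.T]

lemma TV.F_O0_le (v : TV) : TV.F O0 ≤ v := by
  rcases v with a | b
  · exact Sum.Lex.inl_le_inl_iff.2 (O0_le a)
  · exact Sum.Lex.inl_le_inr _ _

lemma TV.le_T_O0 (v : TV) : v ≤ TV.T O0 := by
  rcases v with a | (u | a)
  · exact Sum.Lex.inl_le_inr _ _
  · exact Sum.Lex.inr_le_inr_iff.2 (Sum.Lex.inl_le_inr _ _)
  · exact Sum.Lex.inr_le_inr_iff.2 (Sum.Lex.inr_le_inr_iff.2 (O0_le a.ofDual))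

@[simp] lemma TV.T_sup_F (a b : Ord1) : TV.T a ⊔ TV.F b = TV.T a := sup_eq_left.2 (TV.F_le_T b a)

@[simp] lemma TV.sup_F_ofNat_zero (v : TV) : v ⊔ TV.F (.ofNat 0) = v := by
  simpa using TV.F_O0_le v

@[simp] lemma negv_F (a : Ord1) : negv (TV.F a) = TV.T a.succ := rfl

@[simp] lemma evalBody_singleton (I : Interp) (l : Lit) : evalBody I [l] = evalLit I l := by
  simpa [evalBody] using TV.le_T_O0 (evalLit I l)

@[simp] lemma mem_level {I : Interp} {v : TV} {p : ℕ} : p ∈ level I v ↔ I p = v := Iff.rfl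

lemma lub_eq_of_isLUB {S : Set TV} {v : TV} (h : IsLUB S v) : lub S = v := by
  have hS : ∃ v, IsLUB S v := ⟨v, h⟩
  rw [lub, dif_pos hS]
  exact hS.choose_spec.unique h

lemma isLUB_TP_ofList (l : List Clause) (I : Interp) (p : ℕ) :
    IsLUB {v | ∃ c ∈ {c | c ∈ l}, c.head = p ∧ evalBody I c.body = v}
      ((l.filter (·.head = p)).foldr (fun c v => evalBody I c.body ⊔ v) (TV.F O0)) := by
  induction l with
  | nil => simpa using isLUB_empty_iff.2 TV.F_O0_le
  | cons c l ih =>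
    by_cases hc : c.head = p
    · have hS : {v | ∃ c' ∈ {c' | c' ∈ c :: l}, c'.head = p ∧ evalBody I c'.body = v} =
          insert (evalBody I c.body)
            {v | ∃ c ∈ {c | c ∈ l}, c.head = p ∧ evalBody I c.body = v} := by
        ext v
        simp [hc, eq_comm]
      rw [hS, List.filter_cons_of_pos (by simpa using hc), List.foldr_cons]
      exact ih.insert _
    · have hS : {v | ∃ c' ∈ {c' | c' ∈ c :: l}, c'.head = p ∧ evalBody I c'.body = v} =
          {v | ∃ c ∈ {c | c ∈ l}, c.head = p ∧ evalBody I c.body = v} := by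
        ext v
        simp [hc]
      rw [hS, List.filter_cons_of_neg (by simpa using hc)]
      exact ih

lemma TP_ofList (l : List Clause) (I : Interp) (p : ℕ) :
    TP {c | c ∈ l} I p =
      (l.filter (·.head = p)).foldr (fun c v => evalBody I c.body ⊔ v) (TV.F O0) :=
  lub_eq_of_isLUB (isLUB_TP_ofList l I p)

lemma sqltA_O0_iff {I J : Interp} : sqltA O0 I J ↔
    (level I (TV.T O0) ⊂ level J (TV.T O0) ∧ level J (TV.F O0) ⊆ level I (TV.F O0)) ∨
      (level I (TV.T O0) ⊆ level J (TV.T O0) ∧ level J (TV.F O0) ⊂ level I (TV.F O0)) :=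
  and_iff_right fun β hβ => absurd hβ (O0_le β).not_gt

lemma not_sqleInf_of_not_subset {I J : Interp} {α : Ord1}
    (hbelow : ∀ β < α, level I (TV.T β) = level J (TV.T β) ∧ level I (TV.F β) = level J (TV.F β))
    (hα : ¬ level I (TV.T α) ⊆ level J (TV.T α)) : ¬ sqleInf I J := by
  rintro (rfl | ⟨γ, hlt, hstrict⟩)
  · exact hα subset_rfl
  rcases lt_trichotomy γ α with hγ | rfl | hγ
  · obtain ⟨hT, hF⟩ := hbelow γ hγ
    rcases hstrict with ⟨h, -⟩ | ⟨-, h⟩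
    · exact h.ne hT
    · exact h.ne hF.symm
  · rcases hstrict with ⟨h, -⟩ | ⟨h, -⟩
    · exact hα h.subset
    · exact hα h
  · exact hα (hlt α hγ α le_rfl).1.le

def exampleProgram : Program :=
  {c | c ∈ [⟨0, [.neg 1]⟩, ⟨2, [.pos 0]⟩, ⟨3, [.neg 2]⟩, ⟨3, [.pos 4]⟩, ⟨4, [.pos 3]⟩, ⟨1, [.ff]⟩]}

def exampleI : Interp
  | 0 => TV.T (.ofNat 1)
  | 3 => TV.T (.ofNat 1)
  | _ => TV.F (.ofNat 0)

def exampleJ : Interp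
  | 0 => TV.T (.ofNat 1)
  | 2 | 3 | 4 => TV.F (.ofNat 1)
  | _ => TV.F (.ofNat 0)

lemma TP_exampleProgram (I : Interp) : TP exampleProgram I = fun
    | 0 => negv (I 1)
    | 1 => TV.F O0
    | 2 => I 0
    | 3 => negv (I 2) ⊔ I 4
    | 4 => I 3
    | _ => TV.F O0 := by
  funext n
  rw [exampleProgram, TP_ofList]
  rcases n with _ | _ | _ | _ | _ | n <;> simp [evalLit]

lemma exampleI_sqltA_exampleJ : sqltA O0 exampleI exampleJ := by
  refine sqltA_O0_iff.2 (Or.inr ⟨fun n => ?_, (Set.ssubset_iff_of_subset fun n => ?_).2 ⟨2, ?_⟩⟩)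
  · rcases n with _ | _ | _ | _ | _ | n <;> simp [exampleI]
  · rcases n with _ | _ | _ | _ | _ | n <;> simp [exampleI, exampleJ]
  · simp [exampleI, exampleJ]

lemma level_TP_exampleI_eq_exampleJ {v : TV} (hv : v = TV.T O0 ∨ v = TV.F O0) :
    level (TP exampleProgram exampleI) v = level (TP exampleProgram exampleJ) v := by
  ext n
  rcases hv with rfl | rfl <;> rcases n with _ | _ | _ | _ | _ | n <;>
    simp [TP_exampleProgram, exampleI, exampleJ]

/-- `T_P` is not in general monotonic with respect to `⊑_∞`. -/
theorem TP_not_sqleInf_monotonic :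
    ∃ (P : Program) (I J : Interp),
      P.Finite ∧ sqleInf I J ∧ ¬ sqleInf (TP P I) (TP P J) := by
  refine ⟨exampleProgram, exampleI, exampleJ, List.finite_toSet _,
    Or.inr ⟨O0, exampleI_sqltA_exampleJ⟩, ?_⟩
  refine not_sqleInf_of_not_subset (α := O0.succ) (fun β hβ => ?_) (Set.not_subset.2 ⟨3, ?_, ?_⟩)
  · obtain rfl := le_antisymm (Ord1.lt_succ_iff.1 hβ) (O0_le β)
    exact ⟨level_TP_exampleI_eq_exampleJ (.inl rfl),
      level_TP_exampleI_eq_exampleJ (.inr rfl)⟩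
  · simp [TP_exampleProgram, exampleI]
  · simp [TP_exampleProgram, exampleJ]

end IVS
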